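/- For every x ∈ ℝⁿ and r > 0: the closed Euclidean ball B(x, r) is contained in 𝒰* if and only if minᵢ xᵢ ≥ r and, for every α ∈ ℝ₊ⁿ ∖ {0}, 𝔼[maxᵢ αᵢuᵢ] ≥ α^⊤x + ‖α‖₂·r. -/

import Mathlib

open MeasureTheory

noncomputable section

variable {n : ℕ}

/-- The cube `[0, v̄]ⁿ` of possible report/utility profiles. -/
def cube (n : ℕ) (vbar : ℝ) : Set (Fin n → ℝ) := {v | ∀ i, v i ∈ Set.Icc (0 : ℝ) vbar}

/-- The simplex `Δₙ` (with a do-nothing option). -/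
def simplexSet (n : ℕ) : Set (Fin n → ℝ) := {y | (∀ i, 0 ≤ y i) ∧ ∑ i, y i ≤ 1}

/-- An allocation function: measurable, valued in the simplex on the cube. -/
def IsAllocation (vbar : ℝ) (p : (Fin n → ℝ) → (Fin n → ℝ)) : Prop :=
  Measurable p ∧ ∀ v ∈ cube n vbar, p v ∈ simplexSet n

/-- Interim value for agent `i` reporting `b`: the expectation of the `i`-th coordinate of `g`
over the other agents' utilities. -/
def interimFn (D : Fin n → Measure ℝ) (g : (Fin n → ℝ) → (Fin n → ℝ)) (i : Fin n) (b : ℝ) : ℝ :=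
  ∫ v, g (Function.update v i b) i ∂(Measure.pi D)

/-- Realized utility vector of an allocation function. -/
def realized (D : Fin n → Measure ℝ) (p : (Fin n → ℝ) → (Fin n → ℝ)) : Fin n → ℝ :=
  fun i => ∫ v, v i * p v i ∂(Measure.pi D)

/-- The full-information achievable set `𝒰*`. -/
def Ustar (D : Fin n → Measure ℝ) (vbar : ℝ) : Set (Fin n → ℝ) :=
  {U | ∃ p, IsAllocation vbar p ∧ U = realized D p}

/-- One-shot incentive compatibility. -/
def OneShotIC (D : Fin n → Measure ℝ) (vbar : ℝ) (p : (Fin n → ℝ) → (Fin n → ℝ)) : Prop :=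
  ∀ i, ∀ a ∈ Set.Icc (0 : ℝ) vbar, ∀ b ∈ Set.Icc (0 : ℝ) vbar,
    a * interimFn D p i b ≤ a * interimFn D p i a

/-- The one-shot achievable set `𝒰₀`. -/
def U0set (D : Fin n → Measure ℝ) (vbar : ℝ) : Set (Fin n → ℝ) :=
  {U | ∃ p, IsAllocation vbar p ∧ OneShotIC D vbar p ∧ U = realized D p}

/-- Validity of a promised-utility mechanism on a region `R`. -/
def PromisedOK (D : Fin n → Measure ℝ) (vbar γ : ℝ) (R : Set (Fin n → ℝ))
    (pf Wf : (Fin n → ℝ) → (Fin n → ℝ) → (Fin n → ℝ)) : Prop :=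
  (∀ U ∈ R, IsAllocation vbar (pf U)) ∧
  (∀ U ∈ R, Measurable (Wf U)) ∧
  (∀ U ∈ R, ∀ i, U i =
    ∫ v, ((1 - γ) * (v i * pf U v i) + γ * Wf U v i) ∂(Measure.pi D)) ∧
  (∀ U ∈ R, ∀ v ∈ cube n vbar, Wf U v ∈ R) ∧
  (∀ U ∈ R, ∀ i, ∀ a ∈ Set.Icc (0 : ℝ) vbar, ∀ b ∈ Set.Icc (0 : ℝ) vbar,
    (1 - γ) * a * interimFn D (pf U) i b + γ * interimFn D (Wf U) i b ≤
      (1 - γ) * a * interimFn D (pf U) i a + γ * interimFn D (Wf U) i a)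

/-- The `γ`-discounted achievable set `𝒰_γ`. -/
def Ugamma (D : Fin n → Measure ℝ) (vbar γ : ℝ) : Set (Fin n → ℝ) :=
  {U₀ | (∀ i, 0 ≤ U₀ i) ∧ ∃ R, R ⊆ Ustar D vbar ∧ U₀ ∈ R ∧
    ∃ pf Wf, PromisedOK D vbar γ R pf Wf}

/-- The finite-horizon achievable sets `𝒱_T` (with junk value `∅` at `T = 0`). -/
def Vset (D : Fin n → Measure ℝ) (vbar : ℝ) : ℕ → Set (Fin n → ℝ)
  | 0 => ∅
  | 1 => U0set D vbar
  | (T + 2) =>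
    {U | (∀ i, 0 ≤ U i) ∧ ∃ p W : (Fin n → ℝ) → (Fin n → ℝ), IsAllocation vbar p ∧ Measurable W ∧
      (∀ i, U i = ∫ v, ((1 - (1 - 1 / ((T : ℝ) + 2))) * (v i * p v i)
          + (1 - 1 / ((T : ℝ) + 2)) * W v i) ∂(Measure.pi D)) ∧
      (∀ v ∈ cube n vbar, W v ∈ Vset D vbar (T + 1)) ∧
      (∀ i, ∀ a ∈ Set.Icc (0 : ℝ) vbar, ∀ b ∈ Set.Icc (0 : ℝ) vbar,
        (1 - (1 - 1 / ((T : ℝ) + 2))) * a * interimFn D p i b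
            + (1 - 1 / ((T : ℝ) + 2)) * interimFn D W i b ≤
          (1 - (1 - 1 / ((T : ℝ) + 2))) * a * interimFn D p i a
            + (1 - 1 / ((T : ℝ) + 2)) * interimFn D W i a)}

/-- `sup_{x ∈ S} α ⬝ x`. -/
def supVal (α : Fin n → ℝ) (S : Set (Fin n → ℝ)) : ℝ :=
  sSup ((fun x => ∑ i, α i * x i) '' S)

/-- `Z = maxᵢ αᵢ uᵢ`. -/
def Zmax (α v : Fin n → ℝ) : ℝ := ⨆ i, α i * v i

/-- `Zᵢ = max_{j ≠ i} αⱼ uⱼ`. -/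
def Zminus (α : Fin n → ℝ) (i : Fin n) (v : Fin n → ℝ) : ℝ :=
  ⨆ j ∈ ({i}ᶜ : Set (Fin n)), α j * v j

/-- `Z_B = max_{j ∈ B} αⱼ uⱼ`. -/
def ZB (α : Fin n → ℝ) (B : Finset (Fin n)) (v : Fin n → ℝ) : ℝ := ⨆ j ∈ B, α j * v j

/-- `max_{x ∈ 𝒰*} α ⬝ x = 𝔼[maxᵢ αᵢ uᵢ]`. -/
def maxUstar (D : Fin n → Measure ℝ) (α : Fin n → ℝ) : ℝ :=
  ∫ v, Zmax α v ∂(Measure.pi D)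

/-- Euclidean distance on `Fin n → ℝ`. -/
def euclDist (x y : Fin n → ℝ) : ℝ := Real.sqrt (∑ i, (x i - y i) ^ 2)

/-- Euclidean norm on `Fin n → ℝ`. -/
def euclNorm (x : Fin n → ℝ) : ℝ := Real.sqrt (∑ i, x i ^ 2)

/-- Closed Euclidean ball. -/
def euclBall (x : Fin n → ℝ) (r : ℝ) : Set (Fin n → ℝ) := {y | euclDist x y ≤ r}

/-- Open Euclidean ball. -/
def euclBallOpen (x : Fin n → ℝ) (r : ℝ) : Set (Fin n → ℝ) := {y | euclDist x y < r}

/-- The set `I` of non-superfluous agents for direction `α`. -/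
def Iset (D : Fin n → Measure ℝ) (α : Fin n → ℝ) : Set (Fin n) :=
  {i | (∀ j, j ≠ i → 0 < Measure.pi D {v | α j * v j < α i * v i}) ∧
    ¬∃ m M : ℝ, 0 ≤ m ∧ m ≤ M ∧
      Measure.pi D {v | α i * v i ∈ Set.Icc m M ∪ {0}} = 1 ∧
      ∀ j, j ≠ i → Measure.pi D {v | α j * v j ∈ Set.Ioo m M} = 0}

/-- The set `Ĩ = I ∪ {i : ℙ(αᵢuᵢ = Zᵢ > 0) > 0}`. -/
def Itilde (D : Fin n → Measure ℝ) (α : Fin n → ℝ) : Set (Fin n) :=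
  Iset D α ∪ {i | 0 < Measure.pi D {v | α i * v i = Zminus α i v ∧ 0 < Zminus α i v}}

end

noncomputable section Aux

open MeasureTheory Set

variable {n : ℕ} {vbar : ℝ} {D : Fin n → Measure ℝ} [∀ i, IsProbabilityMeasure (D i)]

lemma cube_ae (hsupp : ∀ i, D i (Set.Icc (0 : ℝ) vbar)ᶜ = 0) :
    ∀ᵐ v ∂(Measure.pi D), v ∈ cube n vbar := by
  rw [ae_iff]
  refine measure_mono_null (fun v hv => ?_)
    (measure_iUnion_null (fun i : Fin n =>
      Measure.pi_eval_preimage_null (μ := D) (i := i) (hsupp i)))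
  simp only [cube, Set.mem_setOf_eq, not_forall] at hv
  obtain ⟨i, hi⟩ := hv
  exact Set.mem_iUnion.2 ⟨i, hi⟩

lemma zmax_le {α v : Fin n → ℝ} {C : ℝ} (hn : 0 < n) (h : ∀ i, α i * v i ≤ C) :
    Zmax α v ≤ C := by
  have : Nonempty (Fin n) := ⟨⟨0, hn⟩⟩
  exact ciSup_le (f := fun j => α j * v j) h

lemma le_zmax (hn : 0 < n) (α v : Fin n → ℝ) (i : Fin n) : α i * v i ≤ Zmax α v := by
  have : Nonempty (Fin n) := ⟨⟨0, hn⟩⟩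
  exact le_ciSup (f := fun j => α j * v j) (Set.Finite.bddAbove (Set.finite_range _)) i

lemma zmax_nonneg (hn : 0 < n) {α v : Fin n → ℝ} (hα : ∀ i, 0 ≤ α i)
    (hvc : v ∈ cube n vbar) : 0 ≤ Zmax α v := by
  have hi : Fin n := ⟨0, hn⟩
  calc (0:ℝ) ≤ α hi * v hi := mul_nonneg (hα hi) (hvc hi).1
  _ ≤ Zmax α v := le_zmax hn α v hi

lemma zmax_measurable (α : Fin n → ℝ) : Measurable (Zmax α) := by
  exact Measurable.iSup fun i => (measurable_pi_apply i).const_mul _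

lemma zmax_integrable (hn : 0 < n) (hvb : 0 ≤ vbar)
    (hsupp : ∀ i, D i (Set.Icc (0 : ℝ) vbar)ᶜ = 0)
    {α : Fin n → ℝ} (hα : ∀ i, 0 ≤ α i) :
    Integrable (Zmax α) (Measure.pi D) := by
  refine Integrable.mono' (integrable_const ((∑ i, α i) * vbar))
    (zmax_measurable α).aestronglyMeasurable ?_
  filter_upwards [cube_ae hsupp] with v hv
  rw [Real.norm_eq_abs, abs_of_nonneg (zmax_nonneg hn hα hv)]
  refine zmax_le hn fun i => ?_
  calc α i * v i ≤ α i * vbar := by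
        exact mul_le_mul_of_nonneg_left (hv i).2 (hα i)
  _ ≤ (∑ j, α j) * vbar := by
        refine mul_le_mul_of_nonneg_right ?_ hvb
        exact Finset.single_le_sum (fun j _ => hα j) (Finset.mem_univ i)

end Aux
noncomputable section Aux2

open MeasureTheory Set

variable {n : ℕ} {vbar : ℝ} {D : Fin n → Measure ℝ} [∀ i, IsProbabilityMeasure (D i)]

lemma simplex_le_one {y : Fin n → ℝ} (hy : y ∈ simplexSet n) (i : Fin n) : y i ≤ 1 :=
  le_trans (Finset.single_le_sum (fun j _ => hy.1 j) (Finset.mem_univ i)) hy.2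

lemma alloc_coord_measurable {p : (Fin n → ℝ) → (Fin n → ℝ)} (hp : Measurable p) (i : Fin n) :
    Measurable fun v => p v i := (measurable_pi_apply i).comp hp

lemma integrable_vp (hsupp : ∀ i, D i (Set.Icc (0 : ℝ) vbar)ᶜ = 0)
    {p : (Fin n → ℝ) → (Fin n → ℝ)} (hp : IsAllocation vbar p) (i : Fin n) :
    Integrable (fun v => v i * p v i) (Measure.pi D) := by
  refine Integrable.mono' (integrable_const vbar)
    ((measurable_pi_apply i).mul (alloc_coord_measurable hp.1 i)).aestronglyMeasurable ?_
  filter_upwards [cube_ae hsupp] with v hv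
  have h1 := (hp.2 v hv).1 i
  have h2 := simplex_le_one (hp.2 v hv) i
  rw [Real.norm_eq_abs, abs_of_nonneg (mul_nonneg (hv i).1 h1)]
  calc v i * p v i ≤ v i * 1 := mul_le_mul_of_nonneg_left h2 (hv i).1
  _ = v i := mul_one _
  _ ≤ vbar := (hv i).2

lemma realized_nonneg (hsupp : ∀ i, D i (Set.Icc (0 : ℝ) vbar)ᶜ = 0)
    {p : (Fin n → ℝ) → (Fin n → ℝ)} (hp : IsAllocation vbar p) (i : Fin n) :
    0 ≤ realized D p i := by
  refine integral_nonneg_of_ae ?_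
  filter_upwards [cube_ae hsupp] with v hv
  exact mul_nonneg (hv i).1 ((hp.2 v hv).1 i)

lemma realized_dot_le (hn : 0 < n) (hvb : 0 ≤ vbar)
    (hsupp : ∀ i, D i (Set.Icc (0 : ℝ) vbar)ᶜ = 0)
    {p : (Fin n → ℝ) → (Fin n → ℝ)} (hp : IsAllocation vbar p)
    {α : Fin n → ℝ} (hα : ∀ i, 0 ≤ α i) :
    ∑ i, α i * realized D p i ≤ ∫ v, Zmax α v ∂(Measure.pi D) := by
  have key : ∑ i, α i * realized D p i
      = ∫ v, (∑ i, α i * (v i * p v i)) ∂(Measure.pi D) := by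
    rw [integral_finset_sum]
    · exact Finset.sum_congr rfl fun i _ => (integral_const_mul _ _).symm
    · exact fun i _ => (integrable_vp hsupp hp i).const_mul _
  rw [key]
  refine integral_mono_ae
    (by exact integrable_finset_sum _ fun i _ => (integrable_vp hsupp hp i).const_mul _)
    (zmax_integrable hn hvb hsupp hα) ?_
  filter_upwards [cube_ae hsupp] with v hv
  have hZ : 0 ≤ Zmax α v := zmax_nonneg hn hα hv
  calc ∑ i, α i * (v i * p v i) ≤ ∑ i, Zmax α v * p v i := by
        refine Finset.sum_le_sum fun i _ => ?_
        rw [← mul_assoc]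
        exact mul_le_mul_of_nonneg_right (le_zmax hn α v i) ((hp.2 v hv).1 i)
  _ = Zmax α v * ∑ i, p v i := by rw [Finset.mul_sum]
  _ ≤ Zmax α v * 1 := mul_le_mul_of_nonneg_left (hp.2 v hv).2 hZ
  _ = Zmax α v := mul_one _

lemma zero_alloc : IsAllocation (n := n) vbar (fun _ => 0) :=
  ⟨measurable_const, fun _ _ => ⟨fun i => le_refl 0, by simp⟩⟩

lemma realized_zero : realized D (fun _ => (0 : Fin n → ℝ)) = 0 := by
  funext i
  simp [realized]

end Aux2
noncomputable section Aux3

open MeasureTheory Set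

variable {n : ℕ} {vbar : ℝ} {D : Fin n → Measure ℝ} [∀ i, IsProbabilityMeasure (D i)]

lemma cube_measurable : MeasurableSet (cube n vbar) := by
  have : cube n vbar = ⋂ i, (fun v : Fin n → ℝ => v i) ⁻¹' (Set.Icc 0 vbar) := by
    ext v; simp [cube, Set.mem_iInter]
  rw [this]
  exact MeasurableSet.iInter fun i => (measurable_pi_apply i) measurableSet_Icc

lemma exists_greedy (hn : 0 < n) (hvb : 0 ≤ vbar)
    (hsupp : ∀ i, D i (Set.Icc (0 : ℝ) vbar)ᶜ = 0) (β : Fin n → ℝ) :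
    ∃ p, IsAllocation vbar p ∧
      ∑ i, β i * realized D p i
        = ∫ v, Zmax (fun i => max (β i) 0) v ∂(Measure.pi D) := by
  classical
  have : Nonempty (Fin n) := ⟨⟨0, hn⟩⟩
  set α : Fin n → ℝ := fun i => max (β i) 0 with hα_def
  have hα : ∀ i, 0 ≤ α i := fun i => le_max_right _ _
  set Z : (Fin n → ℝ) → ℝ := Zmax α with hZ_def
  have hZmeas : Measurable Z := zmax_measurable α
  set S : Fin n → Set (Fin n → ℝ) := fun i =>
    cube n vbar ∩ {v | 0 < Z v} ∩ {v | α i * v i = Z v} ∩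
      ⋂ j ∈ {j : Fin n | j < i}, {v | α j * v j = Z v}ᶜ with hS_def
  have hSmem : ∀ v i, v ∈ S i ↔
      (v ∈ cube n vbar ∧ 0 < Z v ∧ α i * v i = Z v ∧ ∀ j, j < i → α j * v j ≠ Z v) := by
    intro v i
    simp only [hS_def, Set.mem_inter_iff, Set.mem_iInter, Set.mem_setOf_eq, Set.mem_compl_iff]
    tauto
  have hSdisj : ∀ v i j, v ∈ S i → v ∈ S j → i = j := by
    intro v i j hi hj
    rw [hSmem] at hi hj
    rcases lt_trichotomy i j with h | h | h
    · exact absurd hi.2.2.1 (hj.2.2.2 i h)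
    · exact h
    · exact absurd hj.2.2.1 (hi.2.2.2 j h)
  have hSmeas : ∀ i, MeasurableSet (S i) := by
    intro i
    refine (((cube_measurable.inter (hZmeas measurableSet_Ioi)).inter
      (measurableSet_eq_fun ((measurable_pi_apply i).const_mul _) hZmeas)).inter
      (MeasurableSet.biInter (Set.to_countable _) fun j _ =>
        (measurableSet_eq_fun ((measurable_pi_apply j).const_mul _) hZmeas).compl))
  set q : (Fin n → ℝ) → (Fin n → ℝ) := fun v i => if v ∈ S i then 1 else 0 with hq_def
  have hqmeas : Measurable q := by
    refine measurable_pi_lambda _ fun i => ?_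
    exact Measurable.ite (p := fun v => v ∈ S i) (hSmeas i) measurable_const measurable_const
  have hqsum : ∀ v, ∑ i, q v i ≤ 1 := by
    intro v
    have : ∑ i, q v i = ((Finset.univ.filter (fun i => v ∈ S i)).card : ℝ) := by
      simp only [hq_def]
      exact (Finset.natCast_card_filter _ _).symm
    rw [this]
    have hcard : (Finset.univ.filter (fun i => v ∈ S i)).card ≤ 1 := by
      refine Finset.card_le_one.2 fun a ha b hb => ?_
      simp only [Finset.mem_filter] at ha hb
      exact (hSdisj v a b ha.2 hb.2).symm ▸ rfl
    exact_mod_cast hcard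
  have hqalloc : IsAllocation vbar q := by
    refine ⟨hqmeas, fun v _ => ⟨fun i => ?_, hqsum v⟩⟩
    by_cases h : v ∈ S i <;> simp [hq_def, h]
  refine ⟨q, hqalloc, ?_⟩
  have hptwise : ∀ v ∈ cube n vbar, ∑ i, β i * (v i * q v i) = Z v := by
    intro v hv
    by_cases hZv : 0 < Z v
    · obtain ⟨i₁, hi₁⟩ := exists_eq_ciSup_of_finite (f := fun i => α i * v i)
      have hTne : (Finset.univ.filter (fun i => α i * v i = Z v)).Nonempty :=
        ⟨i₁, by simp [hi₁, hZ_def, Zmax]⟩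
      set i₀ := (Finset.univ.filter (fun i => α i * v i = Z v)).min' hTne with hi₀_def
      have hi₀eq : α i₀ * v i₀ = Z v := by
        have := Finset.min'_mem _ hTne
        simpa [hi₀_def] using this
      have hi₀min : ∀ j, j < i₀ → α j * v j ≠ Z v := by
        intro j hj hje
        have : i₀ ≤ j := Finset.min'_le _ _ (by simp [hje])
        exact absurd hj (not_lt.2 this)
      have hvS : v ∈ S i₀ := (hSmem v i₀).2 ⟨hv, hZv, hi₀eq, hi₀min⟩
      have hαpos : 0 < α i₀ := by
        by_contra h
        push_neg at h
        have : α i₀ * v i₀ ≤ 0 := mul_nonpos_of_nonpos_of_nonneg h (hv i₀).1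
        linarith [hi₀eq ▸ this]
      have hβeq : β i₀ = α i₀ := by
        have : 0 < β i₀ := by
          by_contra h
          push_neg at h
          simp only [hα_def] at hαpos
          rw [max_eq_right h] at hαpos
          exact lt_irrefl 0 hαpos
        simp [hα_def, max_eq_left this.le]
      rw [Finset.sum_eq_single i₀]
      · have : q v i₀ = 1 := by simp [hq_def, hvS]
        rw [this, mul_one, hβeq, hi₀eq]
      · intro j _ hj
        have : q v j = 0 := by
          simp only [hq_def, ite_eq_right_iff]
          intro hvj
          exact absurd (hSdisj v j i₀ hvj hvS) hj
        rw [this, mul_zero, mul_zero]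
      · intro h
        exact absurd (Finset.mem_univ i₀) h
    · have hZ0 : Z v = 0 := le_antisymm (not_lt.1 hZv) (zmax_nonneg hn hα hv)
      have : ∀ i, q v i = 0 := by
        intro i
        simp only [hq_def, ite_eq_right_iff]
        intro hvi
        exact absurd ((hSmem v i).1 hvi).2.1 hZv
      simp [this, hZ0]
  have key : ∑ i, β i * realized D q i
      = ∫ v, (∑ i, β i * (v i * q v i)) ∂(Measure.pi D) := by
    rw [integral_finset_sum]
    · exact Finset.sum_congr rfl fun i _ => (integral_const_mul _ _).symm
    · exact fun i _ => (integrable_vp hsupp hqalloc i).const_mul _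
  rw [key]
  refine integral_congr_ae ?_
  filter_upwards [cube_ae hsupp] with v hv
  exact hptwise v hv

end Aux3
noncomputable section Aux4

open MeasureTheory Set
open scoped RealInnerProductSpace

variable {n : ℕ} {vbar : ℝ}

/-- The constraint set of dual functionals. -/
def KKset (D : Fin n → Measure ℝ) : Set (Fin n → WeakDual ℝ (Lp ℝ 2 (Measure.pi D))) :=
  {φ | (∀ i (f : Lp ℝ 2 (Measure.pi D)), (0 ≤ᵐ[Measure.pi D] ⇑f) → 0 ≤ φ i f) ∧
    ∀ f : Lp ℝ 2 (Measure.pi D), (0 ≤ᵐ[Measure.pi D] ⇑f) →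
      ∑ i, φ i f ≤ ∫ v, f v ∂(Measure.pi D)}

variable {D : Fin n → Measure ℝ} [∀ i, IsProbabilityMeasure (D i)]

lemma L2_real_inner (μ : Measure (Fin n → ℝ)) (f g : Lp ℝ 2 μ) :
    ⟪f, g⟫ = ∫ v, f v * g v ∂μ := by
  rw [L2.inner_def]
  congr 1
  funext v
  rw [RCLike.inner_apply', conj_trivial]

lemma integral_le_norm_L2 (μ : Measure (Fin n → ℝ)) [IsProbabilityMeasure μ]
    (g : Lp ℝ 2 μ) : ∫ v, g v ∂μ ≤ ‖g‖ := by
  have h1 : ∫ v, g v ∂μ = ⟪g, Lp.const 2 μ (1:ℝ)⟫ := by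
    rw [L2_real_inner]
    refine integral_congr_ae ?_
    filter_upwards [Lp.coeFn_const 2 μ (1:ℝ)] with v hv
    rw [hv]; simp [Function.const]
  have h2 : ‖Lp.const 2 μ (1:ℝ)‖ = 1 := by
    rw [Lp.norm_const _ _ _ (by norm_num)]
    simp
  calc ∫ v, g v ∂μ = ⟪g, Lp.const 2 μ (1:ℝ)⟫ := h1
  _ ≤ ‖g‖ * ‖Lp.const 2 μ (1:ℝ)‖ := real_inner_le_norm _ _
  _ = ‖g‖ := by rw [h2, mul_one]

lemma Lp_posPart_sub_negPart (μ : Measure (Fin n → ℝ)) (f : Lp ℝ 2 μ) :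
    Lp.posPart f - Lp.negPart f = f := by
  refine Lp.ext ?_
  filter_upwards [Lp.coeFn_sub (Lp.posPart f) (Lp.negPart f), Lp.coeFn_posPart f,
    Lp.coeFn_negPart f] with a h1 h2 h3
  rw [h1, Pi.sub_apply, h2, h3, sub_neg_eq_add, max_add_min, add_zero]

lemma norm_posPart_le (μ : Measure (Fin n → ℝ)) (f : Lp ℝ 2 μ) :
    ‖Lp.posPart f‖ ≤ ‖f‖ := by
  rw [Lp.norm_def, Lp.norm_def]
  refine ENNReal.toReal_mono (Lp.eLpNorm_ne_top f) (eLpNorm_mono_ae ?_)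
  filter_upwards [Lp.coeFn_posPart f] with a ha
  rw [ha, Real.norm_eq_abs, Real.norm_eq_abs]
  rcases le_or_gt (f a) 0 with h | h
  · rw [max_eq_right h]; simp [abs_nonneg]
  · rw [max_eq_left h.le]

lemma norm_negPart_le (μ : Measure (Fin n → ℝ)) (f : Lp ℝ 2 μ) :
    ‖Lp.negPart f‖ ≤ ‖f‖ := by
  rw [Lp.norm_def, Lp.norm_def]
  refine ENNReal.toReal_mono (Lp.eLpNorm_ne_top f) (eLpNorm_mono_ae ?_)
  filter_upwards [Lp.coeFn_negPart f] with a ha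
  rw [ha, Real.norm_eq_abs, Real.norm_eq_abs, abs_neg]
  rcases le_or_gt (f a) 0 with h | h
  · rw [min_eq_left h, abs_of_nonpos h]
  · rw [min_eq_right h.le]; simp [abs_nonneg]

lemma posPart_coe_nonneg (μ : Measure (Fin n → ℝ)) (f : Lp ℝ 2 μ) :
    0 ≤ᵐ[μ] ⇑(Lp.posPart f) := by
  filter_upwards [Lp.coeFn_posPart f] with a ha
  rw [Pi.zero_apply, ha]
  exact le_max_right _ _

lemma negPart_coe_nonneg (μ : Measure (Fin n → ℝ)) (f : Lp ℝ 2 μ) :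
    0 ≤ᵐ[μ] ⇑(Lp.negPart f) := by
  filter_upwards [Lp.coeFn_negPart_eq_max f] with a ha
  rw [Pi.zero_apply, ha]
  exact le_max_right _ _

lemma KK_single_le (φ : Fin n → WeakDual ℝ (Lp ℝ 2 (Measure.pi D))) (hφ : φ ∈ KKset D)
    (i : Fin n) (f : Lp ℝ 2 (Measure.pi D)) (hf : 0 ≤ᵐ[Measure.pi D] ⇑f) :
    φ i f ≤ ∫ v, f v ∂(Measure.pi D) :=
  le_trans (Finset.single_le_sum (fun j _ => hφ.1 j f hf) (Finset.mem_univ i)) (hφ.2 f hf)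

lemma KK_norm_le (φ : Fin n → WeakDual ℝ (Lp ℝ 2 (Measure.pi D))) (hφ : φ ∈ KKset D)
    (i : Fin n) (f : Lp ℝ 2 (Measure.pi D)) : |φ i f| ≤ 2 * ‖f‖ := by
  have h1 : φ i f = φ i (Lp.posPart f) - φ i (Lp.negPart f) := by
    rw [← map_sub, Lp_posPart_sub_negPart]
  have hp : 0 ≤ φ i (Lp.posPart f) := hφ.1 i _ (posPart_coe_nonneg _ f)
  have hn : 0 ≤ φ i (Lp.negPart f) := hφ.1 i _ (negPart_coe_nonneg _ f)
  have hp' : φ i (Lp.posPart f) ≤ ‖f‖ :=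
    le_trans (KK_single_le φ hφ i _ (posPart_coe_nonneg _ f))
      (le_trans (integral_le_norm_L2 _ _) (norm_posPart_le _ f))
  have hn' : φ i (Lp.negPart f) ≤ ‖f‖ :=
    le_trans (KK_single_le φ hφ i _ (negPart_coe_nonneg _ f))
      (le_trans (integral_le_norm_L2 _ _) (norm_negPart_le _ f))
  rw [h1, abs_sub_le_iff]
  constructor <;> nlinarith

lemma KK_isCompact : IsCompact (KKset D) := by
  have hsub : KKset D ⊆ Set.pi Set.univ (fun _ : Fin n =>
      WeakDual.toStrongDual ⁻¹' Metric.closedBall 0 2) := by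
    intro φ hφ
    rw [Set.mem_univ_pi]
    intro i
    simp only [Set.mem_preimage, Metric.mem_closedBall, dist_zero_right]
    refine ContinuousLinearMap.opNorm_le_bound _ (by norm_num) fun f => ?_
    rw [Real.norm_eq_abs]
    calc |(WeakDual.toStrongDual (φ i)) f| = |φ i f| := rfl
    _ ≤ 2 * ‖f‖ := KK_norm_le φ hφ i f
  have hclosed : IsClosed (KKset D) := by
    have : KKset D =
        (⋂ (i : Fin n), ⋂ (f : Lp ℝ 2 (Measure.pi D)),
          ⋂ (_ : 0 ≤ᵐ[Measure.pi D] ⇑f), {φ : Fin n → WeakDual ℝ (Lp ℝ 2 (Measure.pi D)) |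
            0 ≤ φ i f}) ∩
        (⋂ (f : Lp ℝ 2 (Measure.pi D)), ⋂ (_ : 0 ≤ᵐ[Measure.pi D] ⇑f),
          {φ : Fin n → WeakDual ℝ (Lp ℝ 2 (Measure.pi D)) |
            ∑ i, φ i f ≤ ∫ v, f v ∂(Measure.pi D)}) := by
      ext φ
      simp only [KKset, Set.mem_setOf_eq, Set.mem_inter_iff, Set.mem_iInter]
      try tauto
    rw [this]
    refine IsClosed.inter ?_ ?_
    · refine isClosed_iInter fun i => isClosed_iInter fun f => isClosed_iInter fun _ => ?_
      exact isClosed_le continuous_const ((WeakDual.eval_continuous f).comp (continuous_apply i))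
    · refine isClosed_iInter fun f => isClosed_iInter fun _ => ?_
      exact isClosed_le (continuous_finset_sum _ fun i _ =>
        (WeakDual.eval_continuous f).comp (continuous_apply i)) continuous_const
  exact ((isCompact_univ_pi fun _ => WeakDual.isCompact_closedBall (𝕜 := ℝ) 0 2).of_isClosed_subset
    hclosed hsub)

lemma KK_convex : Convex ℝ (KKset D) := by
  intro φ hφ ψ hψ a b ha hb hab
  have happ : ∀ (i : Fin n) (f : Lp ℝ 2 (Measure.pi D)),
      (a • φ + b • ψ) i f = a * φ i f + b * ψ i f := by
    intro i f
    rfl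
  constructor
  · intro i f hf
    rw [happ]
    have := hφ.1 i f hf
    have := hψ.1 i f hf
    positivity
  · intro f hf
    have hsum : ∑ i, (a • φ + b • ψ) i f
        = a * ∑ i, φ i f + b * ∑ i, ψ i f := by
      simp only [happ, Finset.sum_add_distrib, Finset.mul_sum]
    rw [hsum]
    have h1 := hφ.2 f hf
    have h2 := hψ.2 f hf
    have h3 : a * (∫ v, f v ∂(Measure.pi D)) + b * (∫ v, f v ∂(Measure.pi D))
        = ∫ v, f v ∂(Measure.pi D) := by rw [← add_mul, hab, one_mul]
    have h4 := mul_le_mul_of_nonneg_left h1 ha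
    have h5 := mul_le_mul_of_nonneg_left h2 hb
    linarith

end Aux4
noncomputable section Aux5

open MeasureTheory Set
open scoped RealInnerProductSpace

variable {n : ℕ} {vbar : ℝ} {D : Fin n → Measure ℝ} [∀ i, IsProbabilityMeasure (D i)]

lemma coord_memL2 (hsupp : ∀ i, D i (Set.Icc (0 : ℝ) vbar)ᶜ = 0) (i : Fin n) :
    MemLp (fun v : Fin n → ℝ => v i) 2 (Measure.pi D) := by
  refine MemLp.of_bound (measurable_pi_apply i).aestronglyMeasurable vbar ?_
  filter_upwards [cube_ae hsupp] with v hv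
  rw [Real.norm_eq_abs, abs_of_nonneg (hv i).1]
  exact (hv i).2

/-- The coordinate functions as elements of `L²`. -/
def VLp (D : Fin n → Measure ℝ) [∀ i, IsProbabilityMeasure (D i)] (vbar : ℝ)
    (hsupp : ∀ i, D i (Set.Icc (0 : ℝ) vbar)ᶜ = 0) (i : Fin n) : Lp ℝ 2 (Measure.pi D) :=
  MemLp.toLp _ (coord_memL2 hsupp i)

lemma VLp_coe (hsupp : ∀ i, D i (Set.Icc (0 : ℝ) vbar)ᶜ = 0) (i : Fin n) :
    ⇑(VLp D vbar hsupp i) =ᵐ[Measure.pi D] fun v => v i :=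
  MemLp.coeFn_toLp _

/-- Evaluation of a dual tuple on the coordinate functions. -/
def Phi (D : Fin n → Measure ℝ) [∀ i, IsProbabilityMeasure (D i)] (vbar : ℝ)
    (hsupp : ∀ i, D i (Set.Icc (0 : ℝ) vbar)ᶜ = 0)
    (φ : Fin n → WeakDual ℝ (Lp ℝ 2 (Measure.pi D))) : Fin n → ℝ :=
  fun i => φ i (VLp D vbar hsupp i)

lemma Phi_continuous (hsupp : ∀ i, D i (Set.Icc (0 : ℝ) vbar)ᶜ = 0) :
    Continuous (Phi D vbar hsupp) := by
  refine continuous_pi fun i => ?_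
  exact (WeakDual.eval_continuous (VLp D vbar hsupp i)).comp (continuous_apply i)

lemma Phi_image_convex (hsupp : ∀ i, D i (Set.Icc (0 : ℝ) vbar)ᶜ = 0) :
    Convex ℝ (Phi D vbar hsupp '' KKset D) := by
  rintro - ⟨φ, hφ, rfl⟩ - ⟨ψ, hψ, rfl⟩ a b ha hb hab
  refine ⟨a • φ + b • ψ, KK_convex hφ hψ ha hb hab, ?_⟩
  funext i
  show (a • φ + b • ψ) i (VLp D vbar hsupp i) = _
  have : (a • φ + b • ψ) i (VLp D vbar hsupp i)
      = a * φ i (VLp D vbar hsupp i) + b * ψ i (VLp D vbar hsupp i) := rfl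
  rw [this]
  simp [Phi, Pi.add_apply, Pi.smul_apply, smul_eq_mul]

lemma real_inner_eq_mul (a b : ℝ) : ⟪a, b⟫ = a * b := by rw [RCLike.inner_apply', conj_trivial]

lemma alloc_mem_KK (hsupp : ∀ i, D i (Set.Icc (0 : ℝ) vbar)ᶜ = 0)
    {p : (Fin n → ℝ) → (Fin n → ℝ)} (hp : IsAllocation vbar p) :
    ∃ φ ∈ KKset D, Phi D vbar hsupp φ = realized D p := by
  have hmem : ∀ i, MemLp (fun v => p v i) 2 (Measure.pi D) := by
    intro i
    refine MemLp.of_bound (alloc_coord_measurable hp.1 i).aestronglyMeasurable 1 ?_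
    filter_upwards [cube_ae hsupp] with v hv
    rw [Real.norm_eq_abs, abs_of_nonneg ((hp.2 v hv).1 i)]
    exact simplex_le_one (hp.2 v hv) i
  set P : Fin n → Lp ℝ 2 (Measure.pi D) := fun i => MemLp.toLp _ (hmem i) with hP
  set φ : Fin n → WeakDual ℝ (Lp ℝ 2 (Measure.pi D)) :=
    fun i => StrongDual.toWeakDual (InnerProductSpace.toDual ℝ _ (P i)) with hφdef
  have happ : ∀ (i : Fin n) (f : Lp ℝ 2 (Measure.pi D)),
      φ i f = ∫ v, p v i * f v ∂(Measure.pi D) := by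
    intro i f
    have h1 : φ i f = ⟪P i, f⟫ := rfl
    rw [h1, L2_real_inner]
    refine integral_congr_ae ?_
    filter_upwards [MemLp.coeFn_toLp (hmem i)] with v hv
    rw [hv]
  have hint : ∀ (i : Fin n) (f : Lp ℝ 2 (Measure.pi D)),
      Integrable (fun v => p v i * f v) (Measure.pi D) := by
    intro i f
    have := L2.integrable_inner (𝕜 := ℝ) (P i) f
    refine this.congr ?_
    filter_upwards [MemLp.coeFn_toLp (hmem i)] with v hv
    rw [real_inner_eq_mul, hv]
  refine ⟨φ, ⟨?_, ?_⟩, ?_⟩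
  · intro i f hf
    rw [happ]
    refine integral_nonneg_of_ae ?_
    filter_upwards [hf, cube_ae hsupp] with v hfv hv
    exact mul_nonneg ((hp.2 v hv).1 i) hfv
  · intro f hf
    have hs : ∑ i, φ i f = ∫ v, (∑ i, p v i * f v) ∂(Measure.pi D) := by
      rw [integral_finset_sum _ fun i _ => hint i f]
      exact Finset.sum_congr rfl fun i _ => happ i f
    rw [hs]
    refine integral_mono_ae (integrable_finset_sum _ fun i _ => hint i f)
      ((Lp.memLp f).integrable one_le_two) ?_
    filter_upwards [hf, cube_ae hsupp] with v hfv hv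
    calc ∑ i, p v i * f v = (∑ i, p v i) * f v := by rw [Finset.sum_mul]
    _ ≤ 1 * f v := mul_le_mul_of_nonneg_right (hp.2 v hv).2 hfv
    _ = f v := one_mul _
  · funext i
    show φ i (VLp D vbar hsupp i) = realized D p i
    rw [happ]
    refine integral_congr_ae ?_
    filter_upwards [VLp_coe hsupp i] with v hv
    rw [hv, mul_comm]

end Aux5
noncomputable section Aux6

open MeasureTheory Set
open scoped RealInnerProductSpace

variable {n : ℕ} {vbar : ℝ} {D : Fin n → Measure ℝ} [∀ i, IsProbabilityMeasure (D i)]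

lemma KK_realizable (hsupp : ∀ i, D i (Set.Icc (0 : ℝ) vbar)ᶜ = 0)
    {φ : Fin n → WeakDual ℝ (Lp ℝ 2 (Measure.pi D))} (hφ : φ ∈ KKset D) :
    ∃ p, IsAllocation vbar p ∧ realized D p = Phi D vbar hsupp φ := by
  classical
  let μ := Measure.pi D
  set g : Fin n → Lp ℝ 2 μ :=
    fun i => (InnerProductSpace.toDual ℝ _).symm (WeakDual.toStrongDual (φ i)) with hg
  have hgi : ∀ (i : Fin n) (f : Lp ℝ 2 μ), ∫ v, g i v * f v ∂μ = φ i f := by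
    intro i f
    rw [← L2_real_inner]
    exact InnerProductSpace.toDual_symm_apply
  have hint : ∀ i : Fin n, Integrable (⇑(g i)) μ := fun i =>
    (Lp.memLp (g i)).integrable one_le_two
  have hfind : ∀ (s : Set (Fin n → ℝ)) (hs : MeasurableSet s),
      (0 ≤ᵐ[μ] ⇑(indicatorConstLp 2 hs (measure_ne_top μ s) (1:ℝ))) := by
    intro s hs
    filter_upwards [indicatorConstLp_coeFn (p := 2) (hs := hs) (hμs := measure_ne_top μ s)
      (c := (1:ℝ))] with v hv
    rw [Pi.zero_apply, hv]
    exact Set.indicator_nonneg (fun _ _ => zero_le_one) v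
  have hsetint : ∀ (i : Fin n) (s : Set (Fin n → ℝ)) (hs : MeasurableSet s),
      ∫ v in s, g i v ∂μ = φ i (indicatorConstLp 2 hs (measure_ne_top μ s) (1:ℝ)) := by
    intro i s hs
    rw [← hgi]
    rw [← integral_indicator hs]
    refine integral_congr_ae ?_
    filter_upwards [indicatorConstLp_coeFn (p := 2) (hs := hs) (hμs := measure_ne_top μ s)
      (c := (1:ℝ))] with v hv
    rw [hv]
    by_cases h : v ∈ s <;> simp [Set.indicator_of_mem, Set.indicator_of_notMem, h]
  have hindint : ∀ (s : Set (Fin n → ℝ)) (hs : MeasurableSet s),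
      ∫ v, (indicatorConstLp 2 hs (measure_ne_top μ s) (1:ℝ) : Lp ℝ 2 μ) v ∂μ
        = (μ s).toReal := by
    intro s hs
    rw [integral_congr_ae (indicatorConstLp_coeFn (p := 2) (hs := hs)
      (hμs := measure_ne_top μ s) (c := (1:ℝ)))]
    rw [integral_indicator_const _ hs]
    simp
    rfl
  have hg_nonneg : ∀ i : Fin n, 0 ≤ᵐ[μ] ⇑(g i) := by
    intro i
    refine ae_nonneg_of_forall_setIntegral_nonneg (hint i) fun s hs _ => ?_
    rw [hsetint i s hs]
    exact hφ.1 i _ (hfind s hs)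
  have hg_sum : ∀ᵐ v ∂μ, ∑ i, g i v ≤ 1 := by
    have h0 : 0 ≤ᵐ[μ] fun v => 1 - ∑ i, g i v := by
      refine ae_nonneg_of_forall_setIntegral_nonneg
        ((integrable_const 1).sub (integrable_finset_sum _ fun i _ => hint i))
        fun s hs _ => ?_
      rw [integral_sub (integrable_const 1).integrableOn
        (integrable_finset_sum _ fun i _ => hint i).integrableOn]
      rw [integral_finset_sum _ fun i _ => (hint i).integrableOn]
      have h1 : ∫ _ in s, (1:ℝ) ∂μ = (μ s).toReal := by
        rw [setIntegral_const]; simp; rfl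
      have h2 : ∑ i, ∫ v in s, g i v ∂μ
          = ∑ i, φ i (indicatorConstLp 2 hs (measure_ne_top μ s) (1:ℝ)) :=
        Finset.sum_congr rfl fun i _ => hsetint i s hs
      rw [h1, h2]
      have := hφ.2 _ (hfind s hs)
      rw [hindint s hs] at this
      linarith
    filter_upwards [h0] with v hv
    simp only [Pi.zero_apply] at hv
    linarith
  set G : Set (Fin n → ℝ) := (⋂ i, {v | 0 ≤ g i v}) ∩ {v | ∑ i, g i v ≤ 1} with hGdef
  have hGmeas : MeasurableSet G := by
    refine MeasurableSet.inter (MeasurableSet.iInter fun i => ?_) ?_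
    · exact measurableSet_le measurable_const (Lp.stronglyMeasurable (g i)).measurable
    · exact measurableSet_le (Finset.measurable_sum _ fun i _ =>
        (Lp.stronglyMeasurable (g i)).measurable) measurable_const
  have hGae : ∀ᵐ v ∂μ, v ∈ G := by
    have hall : ∀ᵐ v ∂μ, ∀ i, 0 ≤ g i v := ae_all_iff.2 fun i => by
      filter_upwards [hg_nonneg i] with v hv using hv
    filter_upwards [hall, hg_sum] with v h1 h2
    exact ⟨Set.mem_iInter.2 fun i => h1 i, h2⟩
  set p : (Fin n → ℝ) → (Fin n → ℝ) := fun v i => if v ∈ G then g i v else 0 with hpdef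
  have hpmeas : Measurable p := by
    refine measurable_pi_lambda _ fun i => ?_
    exact Measurable.ite hGmeas (Lp.stronglyMeasurable (g i)).measurable measurable_const
  have hpalloc : IsAllocation vbar p := by
    refine ⟨hpmeas, fun v _ => ?_⟩
    by_cases h : v ∈ G
    · have h1 := h.1
      rw [Set.mem_iInter] at h1
      exact ⟨fun i => by simp only [hpdef, if_pos h]; exact h1 i,
        by simp only [hpdef, if_pos h]; exact h.2⟩
    · exact ⟨fun i => by simp [hpdef, if_neg h], by simp [hpdef, if_neg h]⟩
  refine ⟨p, hpalloc, ?_⟩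
  funext i
  show realized D p i = φ i (VLp D vbar hsupp i)
  rw [← hgi i (VLp D vbar hsupp i)]
  refine integral_congr_ae ?_
  filter_upwards [hGae, VLp_coe hsupp i] with v h1 h2
  simp only [hpdef, if_pos h1]
  rw [h2, mul_comm]

end Aux6
noncomputable section Aux7

open MeasureTheory Set

variable {n : ℕ} {vbar : ℝ} {D : Fin n → Measure ℝ} [∀ i, IsProbabilityMeasure (D i)]

lemma mem_Ustar_of_constraints (hn : 0 < n) (hvb : 0 ≤ vbar)
    (hsupp : ∀ i, D i (Set.Icc (0 : ℝ) vbar)ᶜ = 0) {y : Fin n → ℝ}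
    (hy0 : ∀ i, 0 ≤ y i)
    (hyle : ∀ α : Fin n → ℝ, (∀ i, 0 ≤ α i) → α ≠ 0 →
      ∑ i, α i * y i ≤ ∫ v, Zmax α v ∂(Measure.pi D)) :
    y ∈ Ustar D vbar := by
  classical
  by_contra hy
  set C : Set (Fin n → ℝ) := Phi D vbar hsupp '' KKset D with hC
  have hyC : y ∉ C := by
    rintro ⟨φ, hφ, hEq⟩
    obtain ⟨p, hp, hrp⟩ := KK_realizable hsupp hφ
    exact hy ⟨p, hp, by rw [hrp, hEq]⟩
  have hCconv : Convex ℝ C := Phi_image_convex hsupp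
  have hCclosed : IsClosed C := (KK_isCompact.image (Phi_continuous hsupp)).isClosed
  obtain ⟨F, u, hF1, hF2⟩ := geometric_hahn_banach_closed_point hCconv hCclosed hyC
  set β : Fin n → ℝ := fun i => F (Pi.single i (1:ℝ) : Fin n → ℝ) with hβ
  have hFz : ∀ z : Fin n → ℝ, F z = ∑ i, β i * z i := by
    intro z
    have h1 : z = ∑ i, Pi.single i (z i) := (Finset.univ_sum_single z).symm
    have h2 : ∀ i : Fin n, Pi.single i (z i) = z i • (Pi.single i (1:ℝ) : Fin n → ℝ) := by
      intro i
      funext j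
      by_cases h : j = i <;> simp [Pi.single_apply, h]
    calc F z = F (∑ i, Pi.single i (z i)) := by rw [← h1]
    _ = ∑ i, F (Pi.single i (z i)) := map_sum F _ _
    _ = ∑ i, β i * z i := by
        refine Finset.sum_congr rfl fun i _ => ?_
        rw [h2 i, _root_.map_smul, smul_eq_mul, mul_comm]
  obtain ⟨q, hq, hqval⟩ := exists_greedy hn hvb hsupp β
  have hzC : realized D q ∈ C := by
    obtain ⟨φ, hφ, hphi⟩ := alloc_mem_KK hsupp hq
    exact ⟨φ, hφ, hphi⟩
  have h1 : F (realized D q) < u := hF1 _ hzC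
  have h2 : u < F y := hF2
  set α : Fin n → ℝ := fun i => max (β i) 0 with hα
  have hFq : F (realized D q) = ∫ v, Zmax α v ∂(Measure.pi D) := by
    rw [hFz]; exact hqval
  have hFy : F y ≤ ∑ i, α i * y i := by
    rw [hFz]
    exact Finset.sum_le_sum fun i _ =>
      mul_le_mul_of_nonneg_right (le_max_left _ _) (hy0 i)
  by_cases hα0 : α = 0
  · have h0C : (0 : Fin n → ℝ) ∈ C := by
      obtain ⟨φ, hφ, hphi⟩ := alloc_mem_KK hsupp (zero_alloc (vbar := vbar) (n := n))
      exact ⟨φ, hφ, by rw [hphi, realized_zero]⟩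
    have h3 : F 0 < u := hF1 _ h0C
    rw [map_zero] at h3
    have h4 : ∑ i, α i * y i = 0 := by
      rw [hα0]; simp
    linarith
  · have h5 := hyle α (fun i => le_max_right _ _) hα0
    rw [← hFq] at h5
    linarith

end Aux7
noncomputable section Aux8

open MeasureTheory Set

lemma euclNorm_nonneg {n : ℕ} (α : Fin n → ℝ) : 0 ≤ euclNorm α := Real.sqrt_nonneg _

lemma euclNorm_pos {n : ℕ} {α : Fin n → ℝ} (hα : α ≠ 0) : 0 < euclNorm α := by
  have h : ∃ i, α i ≠ 0 := by
    by_contra h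
    push_neg at h
    exact hα (funext h)
  obtain ⟨i, hi⟩ := h
  refine Real.sqrt_pos.2 ?_
  refine Finset.sum_pos' (fun j _ => sq_nonneg _) ⟨i, Finset.mem_univ i, ?_⟩
  have := abs_pos.2 hi
  nlinarith [sq_abs (α i)]

lemma euclNorm_sq {n : ℕ} (α : Fin n → ℝ) : euclNorm α ^ 2 = ∑ i, α i ^ 2 :=
  Real.sq_sqrt (Finset.sum_nonneg fun i _ => sq_nonneg _)

lemma coord_le_euclDist {n : ℕ} (x y : Fin n → ℝ) (i : Fin n) :
    |x i - y i| ≤ euclDist x y := by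
  rw [← Real.sqrt_sq_eq_abs]
  exact Real.sqrt_le_sqrt (Finset.single_le_sum
    (f := fun j => (x j - y j)^2) (fun j _ => sq_nonneg _) (Finset.mem_univ i))

lemma sum_mul_le_norm_dist {n : ℕ} (α x y : Fin n → ℝ) :
    ∑ i, α i * (y i - x i) ≤ euclNorm α * euclDist x y := by
  have h1 : (∑ i, α i * (y i - x i))^2 ≤ (∑ i, α i ^2) * (∑ i, (y i - x i)^2) :=
    Finset.sum_mul_sq_le_sq_mul_sq _ _ _
  have h2 : euclNorm α * euclDist x y
      = Real.sqrt ((∑ i, α i ^2) * (∑ i, (x i - y i)^2)) := by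
    rw [euclNorm, euclDist, ← Real.sqrt_mul (Finset.sum_nonneg fun i _ => sq_nonneg _)]
  have h3 : (∑ i : Fin n, (x i - y i)^2) = ∑ i, (y i - x i)^2 := by
    refine Finset.sum_congr rfl fun i _ => ?_
    ring
  calc ∑ i, α i * (y i - x i) ≤ |∑ i, α i * (y i - x i)| := le_abs_self _
  _ = Real.sqrt ((∑ i, α i * (y i - x i))^2) := (Real.sqrt_sq_eq_abs _).symm
  _ ≤ Real.sqrt ((∑ i, α i ^2) * (∑ i, (y i - x i)^2)) := Real.sqrt_le_sqrt h1
  _ = euclNorm α * euclDist x y := by rw [h2, h3]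

end Aux8

theorem ball_subset_Ustar_iff' {n : ℕ} (hn : 2 ≤ n) (vbar : ℝ) (hv : 0 < vbar)
    (D : Fin n → Measure ℝ) [∀ i, IsProbabilityMeasure (D i)]
    (hsupp : ∀ i, D i (Set.Icc (0 : ℝ) vbar)ᶜ = 0)
    (x : Fin n → ℝ) (r : ℝ) (hr : 0 < r) :
    euclBall x r ⊆ Ustar D vbar ↔
      ((∀ i, r ≤ x i) ∧ ∀ α : Fin n → ℝ, (∀ i, 0 ≤ α i) → α ≠ 0 →
        (∑ i, α i * x i) + euclNorm α * r ≤ ∫ v, Zmax α v ∂(Measure.pi D)) := by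
  classical
  have hn0 : 0 < n := lt_of_lt_of_le (by norm_num) hn
  constructor
  · intro hsub
    constructor
    · intro i
      set y : Fin n → ℝ := fun j => x j - (if j = i then r else 0) with hy
      have hyb : y ∈ euclBall x r := by
        have : euclDist x y = r := by
          rw [euclDist]
          have : ∀ j : Fin n, (x j - y j)^2 = if j = i then r^2 else 0 := by
            intro j
            by_cases h : j = i <;> simp [hy, h]
          rw [Finset.sum_congr rfl fun j _ => this j, Finset.sum_ite_eq' Finset.univ i
            (fun _ => r^2)]
          simp [Real.sqrt_sq hr.le]
        exact le_of_eq this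
      obtain ⟨p, hp, hyr⟩ := hsub hyb
      have h0 : 0 ≤ y i := by
        rw [hyr]
        exact realized_nonneg hsupp hp i
      simp only [hy, eq_self_iff_true, if_true] at h0
      linarith
    · intro α hα hα0
      set N := euclNorm α with hN
      have hNpos : 0 < N := euclNorm_pos hα0
      set y : Fin n → ℝ := fun j => x j + (r / N) * α j with hy
      have hyb : y ∈ euclBall x r := by
        have : euclDist x y = r := by
          rw [euclDist]
          have h1 : ∀ j : Fin n, (x j - y j)^2 = (r/N)^2 * α j ^2 := by
            intro j
            simp only [hy]
            ring
          rw [Finset.sum_congr rfl fun j _ => h1 j, ← Finset.mul_sum,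
            Real.sqrt_mul (sq_nonneg _), Real.sqrt_sq (by positivity),
            ← euclNorm, ← hN, div_mul_cancel₀]
          exact hNpos.ne'
        exact le_of_eq this
      obtain ⟨p, hp, hyr⟩ := hsub hyb
      have key : ∑ i, α i * y i ≤ ∫ v, Zmax α v ∂(Measure.pi D) := by
        rw [hyr]
        exact realized_dot_le hn0 hv.le hsupp hp hα
      have hsum : ∑ i, α i * y i = (∑ i, α i * x i) + N * r := by
        simp only [hy, mul_add, Finset.sum_add_distrib]
        congr 1
        have h2 : ∑ i, α i * (r / N * α i) = (r / N) * ∑ i, α i ^2 := by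
          rw [Finset.mul_sum]
          refine Finset.sum_congr rfl fun i _ => ?_
          ring
        rw [h2, ← euclNorm_sq α, ← hN]
        field_simp
      rw [hsum] at key
      rw [hN] at key
      linarith [key]
  · rintro ⟨hx, hα⟩ y hy
    have hyd : euclDist x y ≤ r := hy
    refine mem_Ustar_of_constraints hn0 hv.le hsupp ?_ ?_
    · intro i
      have h1 := coord_le_euclDist x y i
      have := hx i
      have h2 : x i - y i ≤ r := le_trans (le_abs_self _) (le_trans h1 hyd)
      linarith
    · intro α hα' hα0
      have h1 : ∑ i, α i * y i = (∑ i, α i * x i) + ∑ i, α i * (y i - x i) := by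
        rw [← Finset.sum_add_distrib]
        refine Finset.sum_congr rfl fun i _ => ?_
        ring
      have h2 : ∑ i, α i * (y i - x i) ≤ euclNorm α * r :=
        le_trans (sum_mul_le_norm_dist α x y)
          (mul_le_mul_of_nonneg_left hyd (euclNorm_nonneg α))
      have h3 := hα α hα' hα0
      rw [h1]
      linarith

/-- characterization of Euclidean balls contained in the full-information
achievable set `𝒰*`. -/
theorem ball_subset_Ustar_iff {n : ℕ} (hn : 2 ≤ n) (vbar : ℝ) (hv : 0 < vbar)
    (D : Fin n → Measure ℝ) [∀ i, IsProbabilityMeasure (D i)]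
    (hsupp : ∀ i, D i (Set.Icc (0 : ℝ) vbar)ᶜ = 0)
    (x : Fin n → ℝ) (r : ℝ) (hr : 0 < r) :
    euclBall x r ⊆ Ustar D vbar ↔
      ((∀ i, r ≤ x i) ∧ ∀ α : Fin n → ℝ, (∀ i, 0 ≤ α i) → α ≠ 0 →
        (∑ i, α i * x i) + euclNorm α * r ≤ ∫ v, Zmax α v ∂(Measure.pi D)) := by
  exact ball_subset_Ustar_iff' hn vbar hv D hsupp x r hr
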